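/- The halting probability cannot be effectively computed: there is no computable function g : ℕ → ℚ such that for all n, |(g n : ℝ) − Ω₀| < 2^(−n). -/

import Mathlib

open Nat.Partrec (Code)

/- A halting-probability-style real: sum over all codes `c` that halt on input `0`
of `2^(-(encode c + 1))`. -/
open Classical in
noncomputable def Ω₀ : ℝ :=
  ∑' c : Code,
    if (c.eval 0).Dom then (2 : ℝ) ^ (-((Encodable.encode c : ℤ) + 1)) else 0

open Encodable Denumerable

namespace OmegaAux



/-! ### gcd is primrec -/

private def gstep : ℕ × ℕ → ℕ × ℕ := fun p => if p.2 = 0 then p else (p.2, p.1 % p.2)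

private lemma gstep_iter : ∀ (k : ℕ) (p : ℕ × ℕ), p.2 ≤ k → (gstep^[k] p).1 = Nat.gcd p.2 p.1 := by
  intro k
  induction k with
  | zero => intro p hp; simp at hp; simp [hp, Nat.gcd]
  | succ k ih =>
    intro p hp
    rw [Function.iterate_succ_apply]
    by_cases h : p.2 = 0
    · have : gstep p = p := by simp [gstep, h]
      rw [this, ih p (by omega), Nat.gcd]
    · have hlt : p.1 % p.2 < p.2 := Nat.mod_lt _ (Nat.pos_of_ne_zero h)
      have : gstep p = (p.2, p.1 % p.2) := by simp [gstep, h]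
      rw [this, ih _ (by simp; omega)]
      simp [Nat.gcd_rec p.2 p.1]

lemma primrec_gcd : Primrec₂ Nat.gcd := by
  have hstep : Primrec gstep :=
    Primrec.ite (Primrec.eq.comp Primrec.snd (Primrec.const 0)) Primrec.id
      (Primrec.pair Primrec.snd (Primrec.nat_mod.comp Primrec.fst Primrec.snd))
  have hiter : Primrec fun p : ℕ × ℕ => (gstep^[p.1] (p.2, p.1)) :=
    Primrec.nat_iterate Primrec.fst (Primrec.pair Primrec.snd Primrec.fst)
      (hstep.comp Primrec.snd).to₂
  have h : Primrec fun p : ℕ × ℕ => (gstep^[p.1] (p.2, p.1)).1 := Primrec.fst.comp hiter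
  exact (Primrec₂.mk h).of_eq fun a b => by
    simpa using gstep_iter a (b, a) (le_refl a)

/-! ### powers of two -/

lemma primrec_pow2 : Primrec fun k : ℕ => 2 ^ k := by
  have : Primrec fun k : ℕ => (fun m : ℕ => 2 * m)^[k] 1 :=
    Primrec.nat_iterate Primrec.id (Primrec.const 1)
      ((Primrec.nat_double).comp Primrec.snd).to₂
  refine this.of_eq fun k => ?_
  induction k with
  | zero => simp
  | succ k ih => rw [Function.iterate_succ_apply', ih]; ring



/-! ### the base encoding of ℚ -/

def encB (q : ℚ) : ℕ := Nat.pair (Encodable.encode q.num) q.den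

lemma encB_eq (q : ℚ) : encB q = @Encodable.encode ℚ Rat.instEncodable q := by
  rcases q with ⟨a, b, c, d⟩; rfl

abbrev Sr : Set ℕ := Set.range (@Encodable.encode ℚ Rat.instEncodable)

instance : DecidablePred (· ∈ Sr) := Encodable.decidableRangeEncode ℚ

instance : Infinite Sr :=
  Infinite.of_injective _
    (Equiv.ofInjective _ (@Encodable.encode_injective ℚ Rat.instEncodable)).injective

/-- the `n`-th element of `Sr` (in increasing order) -/
def NS (n : ℕ) : ℕ := (Nat.Subtype.ofNat Sr n : ℕ)

theorem keyA (n : ℕ) :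
    @Encodable.encode ℚ Rat.instEncodable (Denumerable.ofNat ℚ n) = NS n := by
  have h2 : Denumerable.ofNat ℚ n
      = @Denumerable.ofNat ℚ
          (@Denumerable.ofEquiv _ _ (Nat.Subtype.denumerable Sr) (Encodable.equivRangeEncode ℚ)) n :=
    rfl
  rw [h2, Denumerable.ofEquiv_ofNat]
  have h3 : @Denumerable.ofNat Sr (Nat.Subtype.denumerable Sr) n = Nat.Subtype.ofNat Sr n := rfl
  rw [h3]
  exact congrArg Subtype.val
    ((Encodable.equivRangeEncode ℚ).apply_symm_apply (Nat.Subtype.ofNat Sr n))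

lemma NS_encode (q : ℚ) :
    NS (@Encodable.encode ℚ Rat.instDenumerable.toEncodable q) = encB q := by
  have h := keyA (@Encodable.encode ℚ Rat.instDenumerable.toEncodable q)
  rw [Denumerable.ofNat_encode, ← encB_eq] at h
  exact h.symm

/-! ### integer encoding facts -/

lemma encode_int_ofNat (k : ℕ) : Encodable.encode (Int.ofNat k) = 2 * k := by rfl

lemma encode_int_negSucc (k : ℕ) : Encodable.encode (Int.negSucc k) = 2 * k + 1 := by rfl

lemma natAbs_eq_encode (z : ℤ) : z.natAbs = (Encodable.encode z + 1) / 2 := by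
  cases z with
  | ofNat k => rw [encode_int_ofNat]; simp [Int.natAbs]; omega
  | negSucc k => rw [encode_int_negSucc]; simp [Int.natAbs]; omega

lemma bodd_encode_int (z : ℤ) : (Encodable.encode z).bodd = true ↔ z < 0 := by
  cases z with
  | ofNat k =>
      rw [encode_int_ofNat]
      simp [Nat.bodd_mul]
  | negSucc k =>
      rw [encode_int_negSucc]
      simp [Nat.bodd_add, Nat.bodd_mul]

/-! ### membership in `Sr` -/

def mb (n : ℕ) : Bool :=
  decide (¬ n.unpair.2 = 0 ∧ Nat.gcd ((n.unpair.1 + 1) / 2) n.unpair.2 = 1)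

lemma mem_Sr_iff (n : ℕ) : n ∈ Sr ↔ mb n = true := by
  constructor
  · rintro ⟨q, rfl⟩
    rw [← encB_eq]
    have h1 : (encB q).unpair.1 = Encodable.encode q.num := by simp [encB]
    have h2 : (encB q).unpair.2 = q.den := by simp [encB]
    simp only [mb, h1, h2, decide_eq_true_eq]
    refine ⟨q.den_nz, ?_⟩
    rw [← natAbs_eq_encode]
    exact q.reduced
  · intro h
    simp only [mb, decide_eq_true_eq] at h
    refine ⟨⟨Denumerable.ofNat ℤ n.unpair.1, n.unpair.2, h.1, ?_⟩, ?_⟩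
    · rw [natAbs_eq_encode, Denumerable.encode_ofNat]
      exact h.2
    · rw [← encB_eq]
      simp only [encB, Denumerable.encode_ofNat]
      exact Nat.pair_unpair n

lemma primrec_mb : Primrec mb := by
  have h1 : Primrec fun n : ℕ => n.unpair.1 := Primrec.fst.comp Primrec.unpair
  have h2 : Primrec fun n : ℕ => n.unpair.2 := Primrec.snd.comp Primrec.unpair
  have hg : Primrec fun n : ℕ => Nat.gcd ((n.unpair.1 + 1) / 2) n.unpair.2 :=
    primrec_gcd.comp (Primrec.nat_div.comp (Primrec.succ.comp h1) (Primrec.const 2)) h2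
  have hp : PrimrecPred fun n : ℕ =>
      (¬ n.unpair.2 = 0 ∧ Nat.gcd ((n.unpair.1 + 1) / 2) n.unpair.2 = 1) :=
    PrimrecPred.and (PrimrecPred.not (Primrec.eq.comp h2 (Primrec.const 0)))
      (Primrec.eq.comp hg (Primrec.const 1))
  exact hp.decide



lemma foldr_find (p : ℕ → Bool) : ∀ (K d : ℕ),
    (List.range K).foldr (fun i acc => if p i then i else acc) d
      = if h : ∃ m, m < K ∧ p m = true
          then Nat.find (⟨h.choose, h.choose_spec.2⟩ : ∃ m, p m = true) else d := by
  intro K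
  induction K with
  | zero => intro d; simp
  | succ K ih =>
    intro d
    rw [List.range_succ, List.foldr_append]
    simp only [List.foldr_cons, List.foldr_nil]
    rw [ih]
    by_cases hK : ∃ m, m < K ∧ p m = true
    · have hK' : ∃ m, m < K + 1 ∧ p m = true := ⟨hK.choose, by omega, hK.choose_spec.2⟩
      rw [dif_pos hK, dif_pos hK']
    · rw [dif_neg hK]
      by_cases hpK : p K = true
      · have hK' : ∃ m, m < K + 1 ∧ p m = true := ⟨K, by omega, hpK⟩
        rw [if_pos hpK, dif_pos hK']
        refine ((Nat.find_eq_iff _).2 ⟨hpK, fun m hm hpm => hK ⟨m, hm, hpm⟩⟩).symm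
      · have hK' : ¬ ∃ m, m < K + 1 ∧ p m = true := by
          rintro ⟨m, hm, hpm⟩
          rcases Nat.lt_succ_iff_lt_or_eq.1 hm with h | rfl
          · exact hK ⟨m, h, hpm⟩
          · exact hpK hpm
        rw [if_neg hpK, dif_neg hK']

def Bnd (x : ℕ) : ℕ := Nat.pair (2 * (x + 1)) 1

lemma bnd_mem (x : ℕ) : Bnd x ∈ Sr := by
  refine ⟨((x + 1 : ℕ) : ℚ), ?_⟩
  rw [← encB_eq]
  have h1 : (((x + 1 : ℕ) : ℚ)).num = (x + 1 : ℕ) := Rat.num_natCast _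
  have h2 : (((x + 1 : ℕ) : ℚ)).den = 1 := Rat.den_natCast _
  rw [encB, h1, h2]
  have : ((x + 1 : ℕ) : ℤ) = Int.ofNat (x + 1) := rfl
  rw [this, encode_int_ofNat]
  rfl

lemma bnd_witness (x : ℕ) : ∃ m, m ≤ Bnd x ∧ mb (x + m + 1) = true := by
  have hx : x < Bnd x := lt_of_lt_of_le (by omega) (Nat.left_le_pair (2 * (x + 1)) 1)
  refine ⟨Bnd x - x - 1, by omega, ?_⟩
  rw [show x + (Bnd x - x - 1) + 1 = Bnd x by omega, ← mem_Sr_iff]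
  exact bnd_mem x

def succStep (x : ℕ) : ℕ :=
  x + 1 + (List.range (Bnd x + 1)).foldr (fun i acc => if mb (x + i + 1) then i else acc) 0

lemma NS_succ (n : ℕ) : NS (n + 1) = succStep (NS n) := by
  have hex : ∃ m, m < Bnd (NS n) + 1 ∧ mb (NS n + m + 1) = true := by
    obtain ⟨m, hm, hmb⟩ := bnd_witness (NS n)
    exact ⟨m, by omega, hmb⟩
  have hrw := foldr_find (fun m => mb (NS n + m + 1)) (Bnd (NS n) + 1) 0
  rw [succStep, hrw, dif_pos hex]
  have h₂ : ∃ m, mb (NS n + m + 1) = true := ⟨hex.choose, hex.choose_spec.2⟩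
  have h₁ : ∃ m, (NS n : ℕ) + m + 1 ∈ Sr := Nat.Subtype.exists_succ (Nat.Subtype.ofNat Sr n)
  have hval : NS (n + 1) = NS n + Nat.find h₁ + 1 := rfl
  rw [hval]
  have hfind : Nat.find h₁ = Nat.find h₂ := by
    apply le_antisymm
    · exact Nat.find_min' h₁ ((mem_Sr_iff _).2 (Nat.find_spec h₂))
    · exact Nat.find_min' h₂ ((mem_Sr_iff _).1 (Nat.find_spec h₁))
  omega

lemma primrec_Bnd : Primrec Bnd :=
  Primrec₂.natPair.comp (Primrec.nat_double.comp Primrec.succ) (Primrec.const 1)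

lemma primrec_succStep : Primrec succStep := by
  have hstep : Primrec₂ fun (x : ℕ) (p : ℕ × ℕ) => cond (mb (x + p.1 + 1)) p.1 p.2 :=
    Primrec.cond
      (primrec_mb.comp (Primrec.succ.comp
        (Primrec.nat_add.comp Primrec.fst (Primrec.fst.comp Primrec.snd))))
      (Primrec.fst.comp Primrec.snd) (Primrec.snd.comp Primrec.snd)
  have hfold : Primrec fun x : ℕ =>
      (List.range (Bnd x + 1)).foldr (fun i acc => cond (mb (x + i + 1)) i acc) 0 :=
    Primrec.list_foldr (Primrec.list_range.comp (Primrec.succ.comp primrec_Bnd))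
      (Primrec.const 0) hstep
  refine (Primrec.nat_add.comp Primrec.succ hfold).of_eq fun x => ?_
  simp only [succStep, Bool.cond_eq_ite]

lemma primrec_NS : Primrec NS := by
  have h : Primrec fun n : ℕ => succStep^[n] (NS 0) :=
    Primrec.nat_iterate Primrec.id (Primrec.const (NS 0))
      (primrec_succStep.comp Primrec.snd).to₂
  refine h.of_eq fun n => ?_
  induction n with
  | zero => rfl
  | succ n ih => rw [Function.iterate_succ_apply', ih, ← NS_succ]

lemma primrec_encB : Primrec encB := by
  have h := primrec_NS.comp (Primrec.encode (α := ℚ))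
  exact h.of_eq fun q => NS_encode q



lemma qlt_iff (q : ℚ) (a k : ℕ) :
    q < (a : ℚ) / 2 ^ k ↔ (q.num < 0 ∨ q.num.toNat * 2 ^ k < a * q.den) := by
  rw [lt_div_iff₀ (by positivity : (0:ℚ) < 2 ^ k)]
  have hden : (0:ℚ) < (q.den : ℚ) := by exact_mod_cast q.pos
  have key : q * 2 ^ k < (a : ℚ) ↔ (q.num * 2 ^ k : ℤ) < (a : ℤ) * q.den := by
    conv_lhs => rw [← Rat.num_div_den q, div_mul_eq_mul_div, div_lt_iff₀ hden]
    constructor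
    · intro h; exact_mod_cast h
    · intro h; exact_mod_cast h
  rw [key]
  rcases lt_or_ge q.num 0 with h | h
  · simp only [h, true_or, iff_true]
    calc (q.num * 2 ^ k : ℤ) < 0 := by
          apply mul_neg_of_neg_of_pos h; positivity
    _ ≤ (a : ℤ) * q.den := by positivity
  · have hq : (q.num.toNat : ℤ) = q.num := Int.toNat_of_nonneg h
    rw [or_iff_right (not_lt.2 h)]
    constructor
    · intro hlt
      have h2 : (q.num.toNat * 2 ^ k : ℤ) < (a * q.den : ℤ) := by rw [hq]; exact_mod_cast hlt
      exact_mod_cast h2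
    · intro hlt
      have h2 : ((q.num.toNat * 2 ^ k : ℕ) : ℤ) < ((a * q.den : ℕ) : ℤ) := by exact_mod_cast hlt
      push_cast at h2
      rw [hq] at h2
      exact_mod_cast h2

lemma encode_int_nonneg {z : ℤ} (h : 0 ≤ z) : Encodable.encode z = 2 * z.toNat := by
  cases z with
  | ofNat k => rw [encode_int_ofNat]; rfl
  | negSucc k => exact absurd h (by exact not_le.2 (Int.negSucc_lt_zero k))

def qltB (q : ℚ) (x : ℕ × ℕ) : Bool :=
  (encB q).unpair.1.bodd
    || decide ((encB q).unpair.1 / 2 * 2 ^ x.2 < x.1 * (encB q).unpair.2)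

lemma qltB_iff (q : ℚ) (a k : ℕ) : qltB q (a, k) = true ↔ q < (a : ℚ) / 2 ^ k := by
  have h1 : (encB q).unpair.1 = Encodable.encode q.num := by simp [encB]
  have h2 : (encB q).unpair.2 = q.den := by simp [encB]
  rw [qlt_iff]
  simp only [qltB, h1, h2, Bool.or_eq_true, decide_eq_true_eq]
  by_cases h : q.num < 0
  · simp [bodd_encode_int q.num |>.2 h, h]
  · have hb : (Encodable.encode q.num).bodd = false := by
      rcases Bool.eq_false_or_eq_true (Encodable.encode q.num).bodd with hb | hb
      · exact absurd ((bodd_encode_int q.num).1 hb) h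
      · exact hb
    have he : Encodable.encode q.num / 2 = q.num.toNat := by
      rw [encode_int_nonneg (not_lt.1 h)]; omega
    simp [hb, he, h]

lemma primrec_qltB : Primrec₂ qltB := by
  have hu : Primrec fun q : ℚ => (encB q).unpair := Primrec.unpair.comp primrec_encB
  have hu1 : Primrec fun q : ℚ => (encB q).unpair.1 := Primrec.fst.comp hu
  have hu2 : Primrec fun q : ℚ => (encB q).unpair.2 := Primrec.snd.comp hu
  have hbodd : Primrec fun p : ℚ × ℕ × ℕ => ((encB p.1).unpair.1).bodd :=
    Primrec.nat_bodd.comp (hu1.comp Primrec.fst)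
  have hlhs : Primrec fun p : ℚ × ℕ × ℕ => (encB p.1).unpair.1 / 2 * 2 ^ p.2.2 :=
    Primrec.nat_mul.comp
      (Primrec.nat_div.comp (hu1.comp Primrec.fst) (Primrec.const 2))
      (primrec_pow2.comp (Primrec.snd.comp Primrec.snd))
  have hrhs : Primrec fun p : ℚ × ℕ × ℕ => p.2.1 * (encB p.1).unpair.2 :=
    Primrec.nat_mul.comp (Primrec.fst.comp Primrec.snd) (hu2.comp Primrec.fst)
  have hdec : Primrec fun p : ℚ × ℕ × ℕ =>
      decide ((encB p.1).unpair.1 / 2 * 2 ^ p.2.2 < p.2.1 * (encB p.1).unpair.2) :=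
    (Primrec.nat_lt.comp hlhs hrhs).decide
  exact (Primrec.dom_bool₂ (· || ·)).comp hbodd hdec



def DH (s i : ℕ) : Bool := (Nat.Partrec.Code.evaln s (Denumerable.ofNat Code i) 0).isSome

def cN (s : ℕ) : ℕ :=
  (List.range s).foldr (fun i acc => cond (DH s i) (2 ^ (s - i - 1)) 0 + acc) 0

lemma primrec_DH : Primrec₂ DH := by
  have h := Nat.Partrec.Code.primrec_evaln
  exact Primrec.option_isSome.comp
    (h.comp (Primrec.pair
      (Primrec.pair Primrec.fst ((Primrec.ofNat Code).comp Primrec.snd))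
      (Primrec.const 0)))


lemma primrec_cN : Primrec cN := by
  have hstep : Primrec₂ fun (s : ℕ) (p : ℕ × ℕ) =>
      cond (DH s p.1) (2 ^ (s - p.1 - 1)) 0 + p.2 :=
    Primrec.nat_add.comp
      (Primrec.cond (primrec_DH.comp Primrec.fst (Primrec.fst.comp Primrec.snd))
        (primrec_pow2.comp
          (Primrec.nat_sub.comp
            (Primrec.nat_sub.comp Primrec.fst (Primrec.fst.comp Primrec.snd))
            (Primrec.const 1)))
        (Primrec.const 0))
      (Primrec.snd.comp Primrec.snd)
  exact Primrec.list_foldr Primrec.list_range (Primrec.const 0) hstep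

lemma foldr_add (g : ℕ → ℕ) (L : List ℕ) :
    L.foldr (fun i acc => g i + acc) 0 = (L.map g).sum := by
  induction L with
  | nil => rfl
  | cons a l ih => simp [ih]

lemma cN_eq_sum (s : ℕ) :
    cN s = ∑ i ∈ Finset.range s, (if DH s i = true then 2 ^ (s - i - 1) else 0) := by
  have h := foldr_add (fun i => cond (DH s i) (2 ^ (s - i - 1)) 0) (List.range s)
  rw [cN, h]
  have : ((List.range s).map fun i => cond (DH s i) (2 ^ (s - i - 1)) 0).sum
      = ∑ i ∈ Finset.range s, (cond (DH s i) (2 ^ (s - i - 1)) 0) := rfl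
  rw [this]
  exact Finset.sum_congr rfl fun i _ => by rw [Bool.cond_eq_ite]


open Classical in
noncomputable def ff (i : ℕ) : ℝ :=
  if ((Denumerable.ofNat Code i).eval 0).Dom then (2:ℝ) ^ (-((i : ℤ) + 1)) else 0

lemma two_zpow_eq (i : ℕ) : (2:ℝ) ^ (-((i : ℤ) + 1)) = (1/2) * (1/2) ^ i := by
  have h : -((i : ℤ) + 1) = -(((i + 1 : ℕ) : ℤ)) := by push_cast; ring
  rw [h, zpow_neg, zpow_natCast, ← inv_pow, pow_succ]
  ring

lemma ff_nonneg (i : ℕ) : 0 ≤ ff i := by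
  rw [ff]; split
  · positivity
  · exact le_refl 0

lemma ff_le (i : ℕ) : ff i ≤ (2:ℝ) ^ (-((i : ℤ) + 1)) := by
  rw [ff]; split
  · exact le_refl _
  · positivity

lemma summable_bound : Summable fun i : ℕ => (2:ℝ) ^ (-((i : ℤ) + 1)) := by
  have := (summable_geometric_two).mul_left (1/2 : ℝ)
  exact this.congr fun i => (two_zpow_eq i).symm

lemma summable_ff : Summable ff := Summable.of_nonneg_of_le ff_nonneg ff_le summable_bound

noncomputable def Omega' : ℝ := ∑' i, ff i

lemma cN_div_eq (s : ℕ) : (cN s : ℝ) / 2 ^ s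
    = ∑ i ∈ Finset.range s, (if DH s i = true then (2:ℝ) ^ (-((i : ℤ) + 1)) else 0) := by
  rw [cN_eq_sum]
  push_cast [Finset.sum_div]
  refine Finset.sum_congr rfl fun i hi => ?_
  have hi' : i < s := Finset.mem_range.1 hi
  by_cases h : DH s i = true
  · rw [if_pos h, if_pos h]
    have h1 : ((2:ℝ) ^ (s - i - 1 : ℕ)) = (2:ℝ) ^ ((s - i - 1 : ℕ) : ℤ) := (zpow_natCast _ _).symm
    have h2 : ((2:ℝ) ^ (s : ℕ)) = (2:ℝ) ^ ((s : ℕ) : ℤ) := (zpow_natCast _ _).symm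
    rw [h1, h2, ← zpow_sub₀ (by norm_num : (2:ℝ) ≠ 0)]
    congr 1
    omega
  · rw [if_neg h, if_neg h, zero_div]

lemma DH_halts {s i : ℕ} (h : DH s i = true) : ((Denumerable.ofNat Code i).eval 0).Dom := by
  rw [DH] at h
  obtain ⟨x, hx⟩ := Option.isSome_iff_exists.1 h
  exact Part.dom_iff_mem.2 ⟨x, Nat.Partrec.Code.evaln_sound hx⟩

lemma halts_DH {c : Code} (h : (c.eval 0).Dom) : ∃ k, DH k (Encodable.encode c) = true := by
  obtain ⟨k, hk⟩ := (Nat.Partrec.Code.evaln_complete).1 (Part.get_mem h)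
  refine ⟨k, ?_⟩
  rw [DH, Denumerable.ofNat_encode]
  exact Option.isSome_iff_exists.2 ⟨_, hk⟩

lemma DH_mono {s t i : ℕ} (hst : s ≤ t) (h : DH s i = true) : DH t i = true := by
  rw [DH] at h ⊢
  obtain ⟨x, hx⟩ := Option.isSome_iff_exists.1 h
  exact Option.isSome_iff_exists.2 ⟨x, Nat.Partrec.Code.evaln_mono hst hx⟩

lemma exists_stage {x : ℝ} (hx : x < Omega') : ∃ s : ℕ, x < (cN s : ℝ) / 2 ^ s := by
  have hsum : HasSum ff Omega' := summable_ff.hasSum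
  obtain ⟨n, hn⟩ := (hsum.tendsto_sum_nat.eventually (eventually_gt_nhds hx)).exists
  have hK : ∀ i : ℕ, ∃ k, (((Denumerable.ofNat Code i).eval 0).Dom → DH k i = true) := by
    intro i
    by_cases h : ((Denumerable.ofNat Code i).eval 0).Dom
    · obtain ⟨k, hk⟩ := halts_DH h
      rw [Denumerable.encode_ofNat] at hk
      exact ⟨k, fun _ => hk⟩
    · exact ⟨0, fun hh => absurd hh h⟩
  choose K hK using hK
  refine ⟨max n ((Finset.range n).sup K), lt_of_lt_of_le hn ?_⟩
  set s := max n ((Finset.range n).sup K) with hs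
  rw [cN_div_eq]
  have hsub : Finset.range n ⊆ Finset.range s :=
    Finset.range_subset_range.2 (le_max_left _ _)
  refine le_trans (Finset.sum_le_sum fun i hi => ?_)
    (Finset.sum_le_sum_of_subset_of_nonneg hsub fun i _ _ => by positivity)
  by_cases h : ((Denumerable.ofNat Code i).eval 0).Dom
  · have hKs : K i ≤ s := le_trans (Finset.le_sup hi) (le_max_right _ _)
    rw [ff, if_pos h, if_pos (DH_mono hKs (hK i h))]
  · rw [ff, if_neg h]
    positivity

lemma close {c : Code} {s : ℕ} (hdom : (c.eval 0).Dom)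
    (hOM : Omega' < (cN s : ℝ) / 2 ^ s + (2:ℝ) ^ (-((Encodable.encode c : ℤ) + 1))) :
    DH s (Encodable.encode c) = true := by
  by_contra hD
  set gg : ℕ → ℝ := fun i => if DH s i = true ∧ i < s then (2:ℝ) ^ (-((i : ℤ) + 1)) else 0
    with hgg
  have hggzero : ∀ i ∉ Finset.range s, gg i = 0 := fun i hi => by
    rw [hgg]
    simp only [Finset.mem_range, not_lt] at hi
    exact if_neg fun hcon => by omega
  have hsumeq : ∑ i ∈ Finset.range s, gg i
      = ∑ i ∈ Finset.range s, (if DH s i = true then (2:ℝ) ^ (-((i : ℤ) + 1)) else 0) :=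
    Finset.sum_congr rfl fun i hi => by
      have hi' := Finset.mem_range.1 hi
      rw [hgg]
      by_cases h : DH s i = true
      · simp [h, hi']
      · simp [h]
  have hggsum : HasSum gg ((cN s : ℝ) / 2 ^ s) := by
    rw [cN_div_eq, ← hsumeq]
    exact hasSum_sum_of_ne_finset_zero hggzero
  set hh : ℕ → ℝ := fun i =>
    gg i + (if i = Encodable.encode c then (2:ℝ) ^ (-((Encodable.encode c : ℤ) + 1)) else 0)
    with hhdef
  have hhh : HasSum hh
      ((cN s : ℝ) / 2 ^ s + (2:ℝ) ^ (-((Encodable.encode c : ℤ) + 1))) :=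
    hggsum.add (hasSum_ite_eq (Encodable.encode c) _)
  have hhle : ∀ i, hh i ≤ ff i := by
    intro i
    by_cases hie : i = Encodable.encode c
    · have hgge : gg i = 0 := by
        rw [hgg]
        exact if_neg fun hcon => hD (hie ▸ hcon.1)
      have hffe : ff i = (2:ℝ) ^ (-((i : ℤ) + 1)) := by
        rw [ff, if_pos]
        rw [hie, Denumerable.ofNat_encode]
        exact hdom
      rw [hhdef]
      show (gg i + if i = Encodable.encode c then (2:ℝ) ^ (-((Encodable.encode c : ℤ) + 1)) else 0) ≤ ff i
      rw [if_pos hie, hgge, zero_add, hffe, hie]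
    · have h0 : hh i = gg i := by rw [hhdef]; simp [hie]
      rw [h0]
      simp only [hgg]
      by_cases h : DH s i = true ∧ i < s
      · rw [if_pos h, ff, if_pos (DH_halts h.1)]
      · rw [if_neg h]
        exact ff_nonneg i
  have hle : (cN s : ℝ) / 2 ^ s + (2:ℝ) ^ (-((Encodable.encode c : ℤ) + 1)) ≤ Omega' :=
    hasSum_le hhle hhh summable_ff.hasSum
  linarith


open Classical in
lemma omega_eq : Ω₀ = Omega' := by
  rw [Ω₀, Omega']
  rw [← Equiv.tsum_eq (Denumerable.eqv Code).symm]
  refine tsum_congr fun i => ?_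
  have h1 : (Denumerable.eqv Code).symm i = Denumerable.ofNat Code i := rfl
  rw [h1, ff, Denumerable.encode_ofNat]

lemma cast_eq (s e : ℕ) :
    ((cN s * 2 ^ (e + 2) + 2 ^ s : ℕ) : ℝ) / 2 ^ (s + e + 2)
      = (cN s : ℝ) / 2 ^ s + (2:ℝ) ^ (-((e : ℤ) + 2)) := by
  have hz : (2:ℝ) ^ (-((e : ℤ) + 2)) = ((2:ℝ) ^ ((e + 2 : ℕ)))⁻¹ := by
    rw [show -((e : ℤ) + 2) = -(((e + 2 : ℕ) : ℤ)) by push_cast; ring, zpow_neg, zpow_natCast]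
  have hp : (2:ℝ) ^ (s + e + 2) = 2 ^ s * 2 ^ (e + 2) := by
    rw [show s + e + 2 = s + (e + 2) by ring, pow_add]
  rw [hz, hp]
  push_cast
  have h2s : (2:ℝ) ^ s ≠ 0 := by positivity
  have h2e : (2:ℝ) ^ (e + 2) ≠ 0 := by positivity
  field_simp
  try ring

end OmegaAux

open OmegaAux in
/-- The halting probability cannot be effectively computed: no computable sequence
of rationals converges to `Ω₀` at the rate `2^(-n)`. -/
theorem omega_not_computable :
    ¬ ∃ g : ℕ → ℚ, Computable g ∧
        ∀ n : ℕ, |((g n : ℚ) : ℝ) - Ω₀| < (2 : ℝ) ^ (-(n : ℤ)) := by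
  rintro ⟨g, cg, hg⟩
  -- the decidable test
  set T : Code → ℕ → Bool := fun c s =>
    qltB (g (Encodable.encode c + 2))
      (cN s * 2 ^ (Encodable.encode c + 2) + 2 ^ s, s + Encodable.encode c + 2) with hT
  have TtoR : ∀ (c : Code) (s : ℕ), T c s = true ↔
      ((g (Encodable.encode c + 2) : ℚ) : ℝ)
        < (cN s : ℝ) / 2 ^ s + (2:ℝ) ^ (-((Encodable.encode c : ℤ) + 2)) := by
    intro c s
    rw [hT]
    rw [qltB_iff]
    rw [show ((cN s * 2 ^ (Encodable.encode c + 2) + 2 ^ s : ℕ) : ℚ)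
        = ((cN s * 2 ^ (Encodable.encode c + 2) + 2 ^ s : ℕ) : ℚ) from rfl]
    constructor
    · intro h
      have h' : ((g (Encodable.encode c + 2) : ℚ) : ℝ)
          < (((cN s * 2 ^ (Encodable.encode c + 2) + 2 ^ s : ℕ) : ℚ) : ℝ) / 2 ^ (s + Encodable.encode c + 2) := by
        have := (Rat.cast_lt (K := ℝ)).2 h
        push_cast at this ⊢
        convert this using 2 <;> push_cast <;> ring
      rw [show (((cN s * 2 ^ (Encodable.encode c + 2) + 2 ^ s : ℕ) : ℚ) : ℝ)
          = ((cN s * 2 ^ (Encodable.encode c + 2) + 2 ^ s : ℕ) : ℝ) by push_cast; ring] at h'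
      rw [cast_eq s (Encodable.encode c)] at h'
      exact h'
    · intro h
      rw [← cast_eq s (Encodable.encode c)] at h
      rw [show ((cN s * 2 ^ (Encodable.encode c + 2) + 2 ^ s : ℕ) : ℝ)
          = (((cN s * 2 ^ (Encodable.encode c + 2) + 2 ^ s : ℕ) : ℚ) : ℝ) by push_cast; ring] at h
      have h' : ((g (Encodable.encode c + 2) : ℚ) : ℝ)
          < ((((cN s * 2 ^ (Encodable.encode c + 2) + 2 ^ s : ℕ) : ℚ) / 2 ^ (s + Encodable.encode c + 2) : ℚ) : ℝ) := by
        push_cast at h ⊢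
        convert h using 2 <;> push_cast <;> ring
      exact (Rat.cast_lt (K := ℝ)).1 h'
  -- hg in convenient form
  have hg' : ∀ c : Code,
      |((g (Encodable.encode c + 2) : ℚ) : ℝ) - Omega'|
        < (2:ℝ) ^ (-((Encodable.encode c : ℤ) + 2)) := by
    intro c
    have := hg (Encodable.encode c + 2)
    rw [omega_eq] at this
    rwa [show (-((Encodable.encode c + 2 : ℕ) : ℤ)) = -((Encodable.encode c : ℤ) + 2) by
      push_cast; ring] at this
  -- totality of the search
  have hex : ∀ c : Code, ∃ s, T c s = true := by
    intro c
    have habs := abs_lt.1 (hg' c)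
    have hlt : ((g (Encodable.encode c + 2) : ℚ) : ℝ)
        - (2:ℝ) ^ (-((Encodable.encode c : ℤ) + 2)) < Omega' := by linarith [habs.1]
    obtain ⟨s, hs⟩ := exists_stage hlt
    exact ⟨s, (TtoR c s).2 (by linarith)⟩
  -- the decision procedure
  set hB : Code → Bool := fun c => DH (Nat.find (hex c)) (Encodable.encode c) with hBdef
  -- computability
  have hTcomp : Computable₂ T := by
    have henc : Primrec fun c : Code => Encodable.encode c + 2 :=
      Primrec.succ.comp (Primrec.succ.comp Primrec.encode)
    have harg1 : Computable fun p : Code × ℕ => g (Encodable.encode p.1 + 2) :=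
      cg.comp (henc.comp Primrec.fst).to_comp
    have ha : Primrec fun p : Code × ℕ =>
        cN p.2 * 2 ^ (Encodable.encode p.1 + 2) + 2 ^ p.2 :=
      Primrec.nat_add.comp
        (Primrec.nat_mul.comp (primrec_cN.comp Primrec.snd)
          (primrec_pow2.comp (henc.comp Primrec.fst)))
        (primrec_pow2.comp Primrec.snd)
    have hk : Primrec fun p : Code × ℕ => p.2 + Encodable.encode p.1 + 2 :=
      Primrec.succ.comp (Primrec.succ.comp
        (Primrec.nat_add.comp Primrec.snd (Primrec.encode.comp Primrec.fst)))
    have harg2 : Computable fun p : Code × ℕ =>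
        ((cN p.2 * 2 ^ (Encodable.encode p.1 + 2) + 2 ^ p.2, p.2 + Encodable.encode p.1 + 2) : ℕ × ℕ) :=
      (ha.pair hk).to_comp
    exact Computable₂.mk (primrec_qltB.to_comp.comp harg1 harg2)
  have hpc : Partrec₂ fun (c : Code) => ((T c) : ℕ →. Bool) := hTcomp.partrec₂
  have hrf : Partrec fun c : Code => Nat.rfind ((T c) : ℕ →. Bool) := Partrec.rfind hpc
  have hDHc : Computable₂ fun (c : Code) (s : ℕ) => DH s (Encodable.encode c) :=
    (primrec_DH.comp Primrec.snd (Primrec.encode.comp Primrec.fst)).to_comp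
  have hmap : Partrec fun c : Code =>
      (Nat.rfind ((T c) : ℕ →. Bool)).map (fun s => DH s (Encodable.encode c)) :=
    hrf.map hDHc
  have hBcomp : Computable hB := by
    refine Partrec.of_eq_tot hmap fun c => ?_
    have hfind : Nat.find (hex c) ∈ Nat.rfind ((T c) : ℕ →. Bool) := by
      refine Nat.mem_rfind.2 ⟨?_, ?_⟩
      · exact Part.mem_some_iff.2 (Nat.find_spec (hex c)).symm
      · intro m hm
        exact Part.mem_some_iff.2 (Bool.eq_false_iff.2 (Nat.find_min (hex c) hm)).symm
    exact Part.mem_map _ hfind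
  -- correctness: hB decides the halting problem
  have hcorrect : (fun c : Code => (c.eval 0).Dom) = fun c => hB c = true := by
    funext c
    apply propext
    constructor
    · intro hdom
      set s := Nat.find (hex c) with hsdef
      have hs : T c s = true := Nat.find_spec (hex c)
      have hR := (TtoR c s).1 hs
      have habs := abs_lt.1 (hg' c)
      have hzp : (2:ℝ) ^ (-((Encodable.encode c : ℤ) + 1))
          = (2:ℝ) ^ (-((Encodable.encode c : ℤ) + 2)) * 2 := by
        rw [← zpow_add_one₀ (by norm_num : (2:ℝ) ≠ 0)]
        congr 1
        try ring
      have hOM : Omega' < (cN s : ℝ) / 2 ^ s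
          + (2:ℝ) ^ (-((Encodable.encode c : ℤ) + 1)) := by
        rw [hzp]; linarith [habs.2]
      exact close hdom hOM
    · intro hB1
      have := DH_halts (hBdef ▸ hB1)
      rwa [Denumerable.ofNat_encode] at this
  exact ComputablePred.halting_problem 0
    (ComputablePred.computable_iff.2 ⟨hB, hBcomp, hcorrect⟩)
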